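/- arXiv:1109.2724 — 7 statements merged into one kernel-verified Lean document; each statement's English description precedes it below -/
import Mathlib

section
/- Let (E, d) be a metric space, β > 0, and let r : E → ℝ be bounded and Lipschitz-continuous. Let y_n : [0,∞) → E (n ∈ ℕ) and y : [0,∞) → E be right-continuous functions such that y has left limits at every point and the set of discontinuity points of y is countable. Suppose there exist strictly increasing continuous bijections λ_n : [0,∞) → [0,∞) such that for every T > 0, sup_{t∈[0,T]} |λ_n(t) − t| → 0 and sup_{t∈[0,T]} d( y_n(t), y(λ_n(t)) ) → 0 as n → ∞. Then ∫₀^∞ e^{−βt} r(y_n(t)) dt → ∫₀^∞ e^{−βt} r(y(t)) dt as n → ∞. -/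
open MeasureTheory Filter Topology

lemma rc_aemeasurable {E : Type*} [MetricSpace E] (r : E → ℝ) (hr : Continuous r)
    (f : ℝ → E) (hf : ∀ t ≥ (0 : ℝ), ContinuousWithinAt f (Set.Ici t) t) :
    AEMeasurable (fun t => r (f t)) (volume.restrict (Set.Ioi (0 : ℝ))) := by
  set g : ℕ → ℝ → ℝ := fun k t => r (f ((⌈t * 2 ^ k⌉₊ : ℝ) / 2 ^ k)) with hg
  have hgm : ∀ k, Measurable (g k) := by
    intro k
    have : g k = (fun m : ℕ => r (f ((m : ℝ) / 2 ^ k))) ∘ (fun t : ℝ => ⌈t * 2 ^ k⌉₊) := rfl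
    rw [this]
    exact measurable_from_nat.comp (Nat.measurable_ceil.comp (measurable_id.mul_const _))
  have hconv : ∀ t ≥ (0:ℝ), Tendsto (fun k => g k t) atTop (𝓝 (r (f t))) := by
    intro t ht
    have hc : Tendsto (fun k : ℕ => (⌈t * 2 ^ k⌉₊ : ℝ) / 2 ^ k) atTop (𝓝[Set.Ici t] t) := by
      have hmem : ∀ k : ℕ, (⌈t * 2 ^ k⌉₊ : ℝ) / 2 ^ k ∈ Set.Ici t := by
        intro k
        have h2 : (0:ℝ) < 2 ^ k := by positivity
        rw [Set.mem_Ici, le_div_iff₀ h2]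
        exact Nat.le_ceil _
      have hub : ∀ k : ℕ, (⌈t * 2 ^ k⌉₊ : ℝ) / 2 ^ k ≤ t + (1/2) ^ k := by
        intro k
        have h2 : (0:ℝ) < 2 ^ k := by positivity
        rw [div_le_iff₀ h2]
        have := (Nat.ceil_lt_add_one (by positivity : (0:ℝ) ≤ t * 2 ^ k)).le
        calc (⌈t * 2 ^ k⌉₊ : ℝ) ≤ t * 2 ^ k + 1 := this
          _ = (t + (1/2)^k) * 2 ^ k := by rw [add_mul, ← mul_pow]; norm_num
      have htend : Tendsto (fun k : ℕ => (⌈t * 2 ^ k⌉₊ : ℝ) / 2 ^ k) atTop (𝓝 t) := by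
        have h0 : Tendsto (fun k : ℕ => t + (1/2:ℝ) ^ k) atTop (𝓝 (t + 0)) :=
          tendsto_const_nhds.add (tendsto_pow_atTop_nhds_zero_of_lt_one (by norm_num) (by norm_num))
        rw [add_zero] at h0
        exact tendsto_of_tendsto_of_tendsto_of_le_of_le tendsto_const_nhds h0
          (fun k => hmem k) hub
      exact tendsto_nhdsWithin_of_tendsto_nhds_of_eventually_within _ htend
        (Eventually.of_forall hmem)
    exact (hr.tendsto (f t)).comp (((hf t ht).tendsto).comp hc)
  refine aemeasurable_of_tendsto_metrizable_ae atTop (fun k => (hgm k).aemeasurable) ?_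
  filter_upwards [ae_restrict_mem measurableSet_Ioi] with t ht
  exact hconv t (le_of_lt ht)

theorem stmt_3 {E : Type*} [MetricSpace E] (β : ℝ) (hβ : 0 < β)
    (r : E → ℝ) (B : ℝ) (hrB : ∀ x, |r x| ≤ B) (K : NNReal) (hrL : LipschitzWith K r)
    (Y : ℕ → ℝ → E) (y : ℝ → E)
    (hYrc : ∀ n, ∀ t ≥ (0 : ℝ), ContinuousWithinAt (Y n) (Set.Ici t) t)
    (hyrc : ∀ t ≥ (0 : ℝ), ContinuousWithinAt y (Set.Ici t) t)
    (hyll : ∀ t > (0 : ℝ), ∃ l, Tendsto y (nhdsWithin t (Set.Ico 0 t)) (𝓝 l))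
    (hycount : Set.Countable {t : ℝ | 0 ≤ t ∧ ¬ContinuousWithinAt y (Set.Ici 0) t})
    (lam : ℕ → ℝ → ℝ)
    (hlam_mono : ∀ n, StrictMonoOn (lam n) (Set.Ici 0))
    (hlam_cont : ∀ n, ContinuousOn (lam n) (Set.Ici 0))
    (hlam_bij : ∀ n, Set.BijOn (lam n) (Set.Ici 0) (Set.Ici 0))
    (hconv : ∀ T > (0 : ℝ), ∀ ε > (0 : ℝ), ∀ᶠ n in atTop,
      ∀ t ∈ Set.Icc (0 : ℝ) T, |lam n t - t| < ε ∧ dist (Y n t) (y (lam n t)) < ε) :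
    Tendsto (fun n => ∫ t in Set.Ioi (0 : ℝ), Real.exp (-β * t) * r (Y n t)) atTop
      (𝓝 (∫ t in Set.Ioi (0 : ℝ), Real.exp (-β * t) * r (y t))) := by
  have hrc : Continuous r := hrL.continuous
  -- measurability of the exponential factor
  have hexp : Measurable fun t : ℝ => Real.exp (-β * t) :=
    (Real.continuous_exp.comp (continuous_const.mul continuous_id)).measurable
  -- bound
  set bound : ℝ → ℝ := fun t => B * Real.exp (-β * t) with hbound_def
  have hbound_int : Integrable bound (volume.restrict (Set.Ioi (0:ℝ))) :=
    (exp_neg_integrableOn_Ioi 0 hβ).const_mul B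
  have hB0 : 0 ≤ B := le_trans (abs_nonneg _) (hrB (y 0))
  have hFm : ∀ n, AEStronglyMeasurable (fun t => Real.exp (-β * t) * r (Y n t))
      (volume.restrict (Set.Ioi (0:ℝ))) :=
    fun n => (hexp.aemeasurable.mul (rc_aemeasurable r hrc (Y n) (hYrc n))).aestronglyMeasurable
  have hFb : ∀ n, ∀ᵐ t ∂(volume.restrict (Set.Ioi (0:ℝ))),
      ‖Real.exp (-β * t) * r (Y n t)‖ ≤ bound t := by
    intro n
    filter_upwards with t
    rw [norm_mul, Real.norm_eq_abs, Real.norm_eq_abs, abs_of_pos (Real.exp_pos _)]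
    show _ ≤ B * Real.exp (-β * t)
    rw [mul_comm B]
    exact mul_le_mul_of_nonneg_left (hrB _) (Real.exp_pos _).le
  -- a.e. pointwise convergence
  have hlim : ∀ᵐ t ∂(volume.restrict (Set.Ioi (0:ℝ))),
      Tendsto (fun n => Real.exp (-β * t) * r (Y n t)) atTop (𝓝 (Real.exp (-β * t) * r (y t))) := by
    have hS : (volume : Measure ℝ) {t : ℝ | 0 ≤ t ∧ ¬ContinuousWithinAt y (Set.Ici 0) t} = 0 :=
      hycount.measure_zero _
    have hS' : ∀ᵐ t ∂(volume : Measure ℝ),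
        t ∉ {t : ℝ | 0 ≤ t ∧ ¬ContinuousWithinAt y (Set.Ici 0) t} :=
      measure_eq_zero_iff_ae_notMem.mp hS
    filter_upwards [ae_restrict_mem measurableSet_Ioi, ae_restrict_of_ae hS'] with t ht hcont
    have ht0 : (0:ℝ) < t := ht
    have hyc : ContinuousWithinAt y (Set.Ici 0) t := by
      by_contra h
      exact hcont ⟨ht0.le, h⟩
    -- lam n t → t and dist (Y n t) (y (lam n t)) → 0
    have hlamt : Tendsto (fun n => lam n t) atTop (𝓝 t) := by
      rw [Metric.tendsto_atTop]
      intro ε hε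
      rcases ((hconv t ht0 ε hε).exists_forall_of_atTop) with ⟨N, hN⟩
      exact ⟨N, fun n hn => by
        have := (hN n hn t ⟨ht0.le, le_refl t⟩).1
        rwa [Real.dist_eq]⟩
    have hdist : Tendsto (fun n => dist (Y n t) (y (lam n t))) atTop (𝓝 0) := by
      rw [Metric.tendsto_atTop]
      intro ε hε
      rcases ((hconv t ht0 ε hε).exists_forall_of_atTop) with ⟨N, hN⟩
      refine ⟨N, fun n hn => ?_⟩
      have h1 := (hN n hn t ⟨ht0.le, le_refl t⟩).2
      rw [Real.dist_eq, sub_zero, abs_of_nonneg dist_nonneg]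
      exact h1
    have hlam_mem : ∀ n, lam n t ∈ Set.Ici (0:ℝ) :=
      fun n => (hlam_bij n).mapsTo (Set.mem_Ici.mpr ht0.le)
    have hlamt' : Tendsto (fun n => lam n t) atTop (𝓝[Set.Ici 0] t) :=
      tendsto_nhdsWithin_of_tendsto_nhds_of_eventually_within _ hlamt
        (Eventually.of_forall hlam_mem)
    have hylam : Tendsto (fun n => y (lam n t)) atTop (𝓝 (y t)) := hyc.tendsto.comp hlamt'
    have hYt : Tendsto (fun n => Y n t) atTop (𝓝 (y t)) := by
      rw [tendsto_iff_dist_tendsto_zero]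
      refine squeeze_zero (g := fun n => dist (Y n t) (y (lam n t)) + dist (y (lam n t)) (y t))
        (fun n => dist_nonneg) (fun n => dist_triangle _ _ _) ?_
      have := hdist.add (tendsto_iff_dist_tendsto_zero.mp hylam)
      simpa using this
    exact tendsto_const_nhds.mul ((hrc.tendsto (y t)).comp hYt)
  exact tendsto_integral_of_dominated_convergence bound hFm hbound_int hFb hlim
end

section
/- Let U be a metric space and let R^N : U × U → ℝ (N ∈ ℕ) and R : U × U → ℝ be functions such that R is continuous and R^N → R uniformly on U × U. Let (ε_N) be nonnegative reals with ε_N → ε, and for each N let u^N ∈ U satisfy R^N(u^N, u^N) ≥ R^N(v, u^N) − ε_N for all v ∈ U (i.e., u^N is an ε_N-equilibrium for R^N). If φ : ℕ → ℕ is strictly increasing and u^{φ(N)} → u in U, then u is an ε-equilibrium for R, i.e., R(u, u) ≥ R(v, u) − ε for all v ∈ U. -/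
open Filter Topology

theorem stmt_8 {U : Type*} [MetricSpace U]
    (RN : ℕ → U → U → ℝ) (R : U → U → ℝ)
    (hRcont : Continuous fun p : U × U => R p.1 p.2)
    (hunif : TendstoUniformly (fun N (p : U × U) => RN N p.1 p.2)
      (fun p : U × U => R p.1 p.2) atTop)
    (ε : ℕ → ℝ) (εlim : ℝ) (hεnn : ∀ N, 0 ≤ ε N) (hεlim : Tendsto ε atTop (𝓝 εlim))
    (u : ℕ → U) (hu : ∀ N, ∀ v, RN N (u N) (u N) ≥ RN N v (u N) - ε N)
    (φ : ℕ → ℕ) (hφ : StrictMono φ) (ulim : U)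
    (hconv : Tendsto (fun N => u (φ N)) atTop (𝓝 ulim)) :
    ∀ v, R ulim ulim ≥ R v ulim - εlim := by
  intro v
  have hunif' : TendstoUniformly (fun N (p : U × U) => RN (φ N) p.1 p.2)
      (fun p : U × U => R p.1 p.2) atTop :=
    fun s hs => hφ.tendsto_atTop.eventually (hunif s hs)
  have hpair : Tendsto (fun N => ((u (φ N), u (φ N)) : U × U)) atTop (𝓝 (ulim, ulim)) :=
    hconv.prodMk_nhds hconv
  have hpair2 : Tendsto (fun N => ((v, u (φ N)) : U × U)) atTop (𝓝 (v, ulim)) :=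
    tendsto_const_nhds.prodMk_nhds hconv
  have ha : Tendsto (fun N => RN (φ N) (u (φ N)) (u (φ N))) atTop (𝓝 (R ulim ulim)) :=
    hunif'.tendsto_comp hRcont.continuousAt hpair
  have hb : Tendsto (fun N => RN (φ N) v (u (φ N)) - ε (φ N)) atTop
      (𝓝 (R v ulim - εlim)) :=
    (hunif'.tendsto_comp hRcont.continuousAt hpair2).sub (hεlim.comp hφ.tendsto_atTop)
  exact le_of_tendsto_of_tendsto' hb ha (fun N => hu (φ N) v)
end

section
/- For every u₂ ∈ [0,1), the quantity γ₋(u₂) = (2 − u₂/2 − √(2 + u₂²/4))/(1 − u₂) satisfies γ₋(u₂) ≤ 2/3. -/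
theorem stmt_14 (u₂ : ℝ) (hu : 0 ≤ u₂) (hu1 : u₂ < 1) :
    (2 - u₂ / 2 - Real.sqrt (2 + u₂ ^ 2 / 4)) / (1 - u₂) ≤ 2 / 3 := by
  have hpos : (0:ℝ) < 1 - u₂ := by linarith
  have hs : Real.sqrt (2 + u₂ ^ 2 / 4) ≥ 4/3 + u₂/6 := by
    rw [ge_iff_le, show (4/3 + u₂/6 : ℝ) = Real.sqrt ((4/3 + u₂/6)^2) from
      (Real.sqrt_sq (by linarith)).symm]
    apply Real.sqrt_le_sqrt
    nlinarith [sq_nonneg (u₂ - 1)]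
  rw [div_le_iff₀ hpos]
  nlinarith
end

section
/- Fix u₂ ∈ [0,1) and set a₂ = u₂/2 − 2, a₃ = (1 − u₂)/2, γ₋ = (2 − u₂/2 − √(2 + u₂²/4))/(1 − u₂) and γ₊ = (2 − u₂/2 + √(2 + u₂²/4))/(1 − u₂). Let m₀ ∈ [0,1] with m₀ ≠ γ₋, set w₀ = (m₀ − γ₊)/(m₀ − γ₋) and λ = a₃ (γ₊ − γ₋). Then for every t ≥ 0 one has 1 − w₀ e^{λ t} ≠ 0, and the function m(t) = γ₋ + (γ₊ − γ₋)/(1 − w₀ e^{λ t}) satisfies m(0) = m₀ and m′(t) = 1 + a₂ m(t) + a₃ m(t)² for all t ≥ 0. -/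
theorem stmt_15 (u₂ : ℝ) (hu : 0 ≤ u₂) (hu1 : u₂ < 1)
    (m₀ : ℝ) (hm₀ : m₀ ∈ Set.Icc (0 : ℝ) 1)
    (a₂ a₃ γm γp w₀ lam : ℝ)
    (ha₂ : a₂ = u₂ / 2 - 2) (ha₃ : a₃ = (1 - u₂) / 2)
    (hγm : γm = (2 - u₂ / 2 - Real.sqrt (2 + u₂ ^ 2 / 4)) / (1 - u₂))
    (hγp : γp = (2 - u₂ / 2 + Real.sqrt (2 + u₂ ^ 2 / 4)) / (1 - u₂))
    (hne : m₀ ≠ γm)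
    (hw₀ : w₀ = (m₀ - γp) / (m₀ - γm)) (hlam : lam = a₃ * (γp - γm))
    (m : ℝ → ℝ) (hm : ∀ t, m t = γm + (γp - γm) / (1 - w₀ * Real.exp (lam * t))) :
    (∀ t ≥ (0 : ℝ), 1 - w₀ * Real.exp (lam * t) ≠ 0) ∧ m 0 = m₀ ∧
      ∀ t ≥ (0 : ℝ),
        HasDerivWithinAt m (1 + a₂ * m t + a₃ * m t ^ 2) (Set.Ici 0) t := by
  obtain ⟨hm0, hm1⟩ := hm₀
  have hc : (0:ℝ) < 1 - u₂ := by linarith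
  have hc' : (1:ℝ) - u₂ ≠ 0 := ne_of_gt hc
  set s : ℝ := Real.sqrt (2 + u₂ ^ 2 / 4) with hs
  have hs2 : s ^ 2 = 2 + u₂ ^ 2 / 4 := Real.sq_sqrt (by positivity)
  have hspos : 0 < s := Real.sqrt_pos.mpr (by positivity)
  have hlam_s : lam = s := by
    rw [hlam, ha₃, hγp, hγm]; field_simp; ring
  have hlampos : 0 < lam := hlam_s ▸ hspos
  have hD : γp - γm = 2 * s / (1 - u₂) := by
    rw [hγp, hγm]; field_simp; ring
  have hDpos : 0 < γp - γm := by rw [hD]; positivity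
  have hγp1 : 1 < γp := by
    rw [hγp, lt_div_iff₀ hc]; nlinarith
  have hmne : m₀ - γm ≠ 0 := sub_ne_zero.mpr hne
  have hkey : w₀ * (m₀ - γm) = m₀ - γp := by
    rw [hw₀]; field_simp
  have hroot : a₃ * γm ^ 2 + a₂ * γm + 1 = 0 := by
    rw [ha₃, ha₂, hγm]; field_simp; nlinarith [hs2]
  have hsum : a₂ + a₃ * (γm + γp) = 0 := by
    rw [ha₃, ha₂, hγm, hγp]; field_simp; ring
  have hprod : a₃ * (γm * γp) = 1 := by
    rw [ha₃, hγm, hγp]; field_simp; linear_combination (-4) * hs2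
  have hfac : ∀ x : ℝ, 1 + a₂ * x + a₃ * x ^ 2 = a₃ * (x - γm) * (x - γp) := by
    intro x; linear_combination x * hsum - hprod
  have hg : ∀ t ≥ (0:ℝ), 1 - w₀ * Real.exp (lam * t) ≠ 0 := by
    intro t ht
    have hE1 : 1 ≤ Real.exp (lam * t) :=
      Real.one_le_exp (by positivity)
    rcases lt_or_gt_of_ne hne with h | h
    · have hw1 : 0 < w₀ - 1 := by
        have heq : w₀ - 1 = (γm - γp) / (m₀ - γm) := by
          field_simp; linear_combination hkey
        rw [heq]; apply div_pos_of_neg_of_neg <;> linarith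
      have h2 : w₀ ≤ w₀ * Real.exp (lam * t) :=
        le_mul_of_one_le_right (by linarith) hE1
      intro hcontra; linarith
    · have hw1 : w₀ < 0 := by
        rw [hw₀]; apply div_neg_of_neg_of_pos <;> linarith
      have h2 : w₀ * Real.exp (lam * t) < 0 :=
        mul_neg_of_neg_of_pos hw1 (by positivity)
      intro hcontra; linarith
  have hg0 : 1 - w₀ ≠ 0 := by
    have := hg 0 le_rfl
    simpa using this
  refine ⟨hg, ?_, ?_⟩
  · rw [hm 0]
    rw [mul_zero, Real.exp_zero, mul_one]
    field_simp
    linear_combination hkey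
  · intro t ht
    have hgt := hg t ht
    have h1 : HasDerivAt (fun t : ℝ => lam * t) lam t := by
      simpa using (hasDerivAt_id t).const_mul lam
    have hE : HasDerivAt (fun t : ℝ => Real.exp (lam * t))
        (Real.exp (lam * t) * lam) t := (Real.hasDerivAt_exp (lam * t)).comp t h1
    have hgd : HasDerivAt (fun t : ℝ => 1 - w₀ * Real.exp (lam * t))
        (0 - w₀ * (Real.exp (lam * t) * lam)) t :=
      (hasDerivAt_const t 1).sub (hE.const_mul w₀)
    have hdiv : HasDerivAt (fun t : ℝ => γm + (γp - γm) / (1 - w₀ * Real.exp (lam * t)))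
        (0 + (0 * (1 - w₀ * Real.exp (lam * t)) - (γp - γm) * (0 - w₀ * (Real.exp (lam * t) * lam))) /
          (1 - w₀ * Real.exp (lam * t)) ^ 2) t :=
      (hasDerivAt_const t γm).add (((hasDerivAt_const t (γp - γm)).div hgd hgt))
    have hmf : m = fun t : ℝ => γm + (γp - γm) / (1 - w₀ * Real.exp (lam * t)) := funext hm
    have hdm : HasDerivAt m
        (0 + (0 * (1 - w₀ * Real.exp (lam * t)) - (γp - γm) * (0 - w₀ * (Real.exp (lam * t) * lam))) /
          (1 - w₀ * Real.exp (lam * t)) ^ 2) t := by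
      rw [hmf]; exact hdiv
    have hma : m t - γm = (γp - γm) / (1 - w₀ * Real.exp (lam * t)) := by
      rw [hm t]; ring
    have hmb : m t - γp = (γp - γm) * (w₀ * Real.exp (lam * t)) / (1 - w₀ * Real.exp (lam * t)) := by
      rw [hm t]; field_simp; ring
    have hveq : 0 + (0 * (1 - w₀ * Real.exp (lam * t)) - (γp - γm) * (0 - w₀ * (Real.exp (lam * t) * lam))) /
          (1 - w₀ * Real.exp (lam * t)) ^ 2 = 1 + a₂ * m t + a₃ * m t ^ 2 := by
      rw [hfac (m t), hma, hmb, hlam]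
      field_simp
      ring
    exact (hveq ▸ hdm).hasDerivWithinAt
end

section
/- Fix u₂ ∈ [0,1) and set a₂ = u₂/2 − 2, a₃ = (1 − u₂)/2 and γ₋ = (2 − u₂/2 − √(2 + u₂²/4))/(1 − u₂). Let m₀ ∈ [0,1] and let m : [0,∞) → ℝ be a differentiable function with m(0) = m₀ and m′(t) = 1 + a₂ m(t) + a₃ m(t)² for all t ≥ 0. Then m(t) → γ₋ as t → ∞. -/
open Filter Topology

/-- Barrier lemma: if the vector field is negative at level `b` and the solution starts
below `b`, it stays below `b`. -/
lemma barrier_lemma (F m : ℝ → ℝ)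
    (hode : ∀ t ≥ (0 : ℝ), HasDerivWithinAt m (F (m t)) (Set.Ici 0) t)
    (b : ℝ) (hFb : F b < 0) (h0 : m 0 < b) :
    ∀ t ≥ (0 : ℝ), m t < b := by
  have hcont : ContinuousOn m (Set.Ici 0) := fun t ht => (hode t ht).continuousWithinAt
  by_contra h
  push_neg at h
  obtain ⟨t₁, ht₁, hbt₁⟩ := h
  set A : Set ℝ := {t | 0 ≤ t ∧ b ≤ m t} with hA
  have hAne : A.Nonempty := ⟨t₁, ht₁, hbt₁⟩
  have hAbdd : BddBelow A := ⟨0, fun x hx => hx.1⟩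
  have hAclosed : IsClosed A := by
    have heq : A = Set.Ici 0 ∩ m ⁻¹' Set.Ici b := rfl
    rw [heq]
    exact hcont.preimage_isClosed_of_isClosed isClosed_Ici isClosed_Ici
  set T := sInf A with hT
  have hTA : T ∈ A := hAclosed.csInf_mem hAne hAbdd
  have hT0 : 0 ≤ T := hTA.1
  have hTpos : 0 < T := by
    rcases hT0.lt_or_eq with h' | h'
    · exact h'
    · exact absurd (h' ▸ hTA.2) (not_le.mpr h0)
  have hlt : ∀ t, 0 ≤ t → t < T → m t < b := by
    intro t h0t htT
    by_contra hge
    push_neg at hge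
    exact absurd (csInf_le hAbdd ⟨h0t, hge⟩) (not_le.mpr htT)
  have hderiv : HasDerivAt m (F (m T)) T :=
    (hode T hT0).hasDerivAt (Ici_mem_nhds hTpos)
  have hmTb : m T = b := by
    refine le_antisymm ?_ hTA.2
    have h1 : Tendsto m (𝓝[<] T) (𝓝 (m T)) :=
      hderiv.continuousAt.continuousWithinAt.tendsto
    refine le_of_tendsto h1 ?_
    filter_upwards [Ioo_mem_nhdsLT_of_mem (Set.mem_Ioc.mpr ⟨hTpos, le_refl T⟩)] with t ht
    exact (hlt t ht.1.le ht.2).le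
  have hslope : Tendsto (slope m T) (𝓝[≠] T) (𝓝 (F (m T))) :=
    hasDerivAt_iff_tendsto_slope.mp hderiv
  have hslope' : Tendsto (slope m T) (𝓝[<] T) (𝓝 (F (m T))) :=
    hslope.mono_left (nhdsWithin_mono T (fun x hx => ne_of_lt hx))
  have hge0 : 0 ≤ F (m T) := by
    refine ge_of_tendsto hslope' ?_
    filter_upwards [Ioo_mem_nhdsLT_of_mem (Set.mem_Ioc.mpr ⟨hTpos, le_refl T⟩)] with t ht
    have hmt : m t < b := hlt t ht.1.le ht.2
    have hsl : slope m T t = (m t - m T) / (t - T) := slope_def_field m T t ▸ rfl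
    rw [hsl, hmTb]
    have : 0 < (m t - b) / (t - T) :=
      div_pos_of_neg_of_neg (by linarith) (by linarith [ht.2])
    linarith
  rw [hmTb] at hge0
  linarith

theorem stmt_16 (u₂ : ℝ) (hu : 0 ≤ u₂) (hu1 : u₂ < 1)
    (m₀ : ℝ) (hm₀ : m₀ ∈ Set.Icc (0 : ℝ) 1)
    (m : ℝ → ℝ) (hm0 : m 0 = m₀)
    (hode : ∀ t ≥ (0 : ℝ), HasDerivWithinAt m
      (1 + (u₂ / 2 - 2) * m t + (1 - u₂) / 2 * m t ^ 2) (Set.Ici 0) t) :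
    Tendsto m atTop (𝓝 ((2 - u₂ / 2 - Real.sqrt (2 + u₂ ^ 2 / 4)) / (1 - u₂))) := by
  obtain ⟨hm₀0, hm₀1⟩ := hm₀
  set s := Real.sqrt (2 + u₂ ^ 2 / 4) with hs_def
  have hD : (0:ℝ) ≤ 2 + u₂ ^ 2 / 4 := by positivity
  have hs2 : s ^ 2 = 2 + u₂ ^ 2 / 4 := Real.sq_sqrt hD
  have hs0 : 0 ≤ s := Real.sqrt_nonneg _
  have h1u : (0:ℝ) < 1 - u₂ := by linarith
  set γ := (2 - u₂ / 2 - s) / (1 - u₂) with hγ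
  set γp := (2 - u₂ / 2 + s) / (1 - u₂) with hγp
  set F : ℝ → ℝ := fun x => 1 + (u₂ / 2 - 2) * x + (1 - u₂) / 2 * x ^ 2 with hF
  -- factorization
  have hfact : ∀ x, F x = (1 - u₂) / 2 * ((x - γ) * (x - γp)) := by
    intro x
    simp only [hF, hγ, hγp]
    field_simp
    ring_nf
    nlinarith [hs2]
  have hγp1 : 1 < γp := by
    rw [hγp, lt_div_iff₀ h1u]
    linarith
  have hγ1 : γ < 1 := by
    rw [hγ, div_lt_one h1u]
    have : 1 + u₂ / 2 < s := by
      rw [hs_def]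
      rw [show (1 + u₂/2 : ℝ) = Real.sqrt ((1 + u₂/2)^2) from
        (Real.sqrt_sq (by linarith)).symm]
      apply Real.sqrt_lt_sqrt (by positivity)
      nlinarith
    linarith
  set b₀ := (1 + γp) / 2 with hb₀
  have hb₀1 : 1 < b₀ := by rw [hb₀]; linarith
  have hb₀γp : b₀ < γp := by rw [hb₀]; linarith
  have hFb₀ : F b₀ < 0 := by
    rw [hfact]
    apply mul_neg_of_pos_of_neg (by positivity)
    exact mul_neg_of_pos_of_neg (by linarith) (by linarith)
  have hode' : ∀ t ≥ (0:ℝ), HasDerivWithinAt m (F (m t)) (Set.Ici 0) t := hode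
  have hbar : ∀ t ≥ (0:ℝ), m t < b₀ :=
    barrier_lemma F m hode' b₀ hFb₀ (by rw [hm0]; linarith)
  set c := (1 - u₂) * (γp - b₀) with hc
  have hcpos : 0 < c := by
    rw [hc]; exact mul_pos h1u (by linarith)
  set g : ℝ → ℝ := fun t => (m t - γ) ^ 2 * Real.exp (c * t) with hg
  have hcont : ContinuousOn m (Set.Ici 0) := fun t ht => (hode' t ht).continuousWithinAt
  have hgderivAt : ∀ t > (0:ℝ), HasDerivAt g
      ((2 * (m t - γ) * F (m t) + c * (m t - γ) ^ 2) * Real.exp (c * t)) t := by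
    intro t ht
    have hmt : HasDerivAt m (F (m t)) t :=
      (hode' t ht.le).hasDerivAt (Ici_mem_nhds ht)
    have h1 : HasDerivAt (fun t => (m t - γ) ^ 2) (2 * (m t - γ) * F (m t)) t := by
      have := ((hmt.sub_const γ).pow 2)
      simpa [Pi.pow_def] using this
    have h2 : HasDerivAt (fun t => Real.exp (c * t)) (c * Real.exp (c * t)) t := by
      have hid : HasDerivAt (fun t : ℝ => c * t) c t := by
        simpa using (hasDerivAt_id t).const_mul c
      simpa [mul_comm] using hid.exp
    have := h1.mul h2
    exact this.congr_deriv (by ring)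
  have hgd : ∀ t > (0:ℝ), deriv g t ≤ 0 := by
    intro t ht
    rw [(hgderivAt t ht).deriv]
    have hmb : m t < b₀ := hbar t ht.le
    have hkey : 2 * (m t - γ) * F (m t) + c * (m t - γ) ^ 2 =
        (1 - u₂) * (m t - γ) ^ 2 * (m t - b₀) := by
      rw [hfact, hc]; ring
    rw [hkey]
    have h1 : (1 - u₂) * (m t - γ) ^ 2 * (m t - b₀) ≤ 0 :=
      mul_nonpos_of_nonneg_of_nonpos (mul_nonneg h1u.le (sq_nonneg _)) (by linarith)
    exact mul_nonpos_of_nonpos_of_nonneg h1 (Real.exp_pos _).le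
  have hanti : AntitoneOn g (Set.Ici 0) := by
    apply antitoneOn_of_deriv_nonpos (convex_Ici 0)
    · exact ((hcont.sub continuousOn_const).pow 2).mul
        ((Real.continuous_exp.comp (continuous_const.mul continuous_id)).continuousOn)
    · intro t ht
      rw [interior_Ici] at ht
      exact (hgderivAt t ht).differentiableAt.differentiableWithinAt
    · intro t ht
      rw [interior_Ici] at ht
      exact hgd t ht
  have hbound : ∀ t ≥ (0:ℝ), (m t - γ) ^ 2 ≤ (m₀ - γ) ^ 2 * Real.exp (-(c * t)) := by
    intro t ht
    have := hanti (Set.self_mem_Ici) ht ht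
    simp only [hg] at this
    rw [hm0] at this
    simp only [mul_zero, Real.exp_zero, mul_one] at this
    have hexp : (0:ℝ) < Real.exp (c * t) := Real.exp_pos _
    rw [Real.exp_neg, ← div_eq_mul_inv, le_div_iff₀ hexp]
    exact this
  have hrhs : Tendsto (fun t => (m₀ - γ) ^ 2 * Real.exp (-(c * t))) atTop (𝓝 0) := by
    have h1 : Tendsto (fun t : ℝ => c * t) atTop atTop :=
      Tendsto.const_mul_atTop hcpos tendsto_id
    have h2 : Tendsto (fun t : ℝ => Real.exp (-(c * t))) atTop (𝓝 0) :=
      Real.tendsto_exp_neg_atTop_nhds_zero.comp h1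
    simpa using h2.const_mul ((m₀ - γ) ^ 2)
  have hsq : Tendsto (fun t => (m t - γ) ^ 2) atTop (𝓝 0) := by
    apply squeeze_zero' ?_ ?_ hrhs
    · filter_upwards [eventually_ge_atTop (0:ℝ)] with t ht
      positivity
    · filter_upwards [eventually_ge_atTop (0:ℝ)] with t ht
      exact hbound t ht
  have habs : Tendsto (fun t => |m t - γ|) atTop (𝓝 0) := by
    have h := (Real.continuous_sqrt.tendsto 0).comp hsq
    simp only [Function.comp_def, Real.sqrt_sq_eq_abs, Real.sqrt_zero] at h
    exact h
  have hdiff : Tendsto (fun t => m t - γ) atTop (𝓝 0) := by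
    rw [tendsto_zero_iff_abs_tendsto_zero]
    exact habs
  have : Tendsto m atTop (𝓝 γ) := by
    have := hdiff.add_const γ
    simpa using this
  exact this
end

section
/- Fix u₂ ∈ [0,1] and set a₂ = u₂/2 − 2, a₃ = (1 − u₂)/2. Let m₀ ∈ [0,1] and let m : [0,∞) → ℝ be a differentiable function with m(0) = m₀ and m′(t) = 1 + a₂ m(t) + a₃ m(t)² for all t ≥ 0. Then for every t ≥ 0 one has 0 ≤ m(t) ≤ max(m₀, 2/3); in particular m(t) ∈ [0,1] for all t ≥ 0. -/
theorem stmt_17 (u₂ : ℝ) (hu : u₂ ∈ Set.Icc (0 : ℝ) 1)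
    (m₀ : ℝ) (hm₀ : m₀ ∈ Set.Icc (0 : ℝ) 1)
    (m : ℝ → ℝ) (hm0 : m 0 = m₀)
    (hode : ∀ t ≥ (0 : ℝ), HasDerivWithinAt m
      (1 + (u₂ / 2 - 2) * m t + (1 - u₂) / 2 * m t ^ 2) (Set.Ici 0) t) :
    ∀ t ≥ (0 : ℝ), 0 ≤ m t ∧ m t ≤ max m₀ (2 / 3) ∧ m t ∈ Set.Icc (0 : ℝ) 1 := by
  obtain ⟨hu0, hu1⟩ := hu
  obtain ⟨hm₀0, hm₀1⟩ := hm₀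
  set c : ℝ := max m₀ (2 / 3) with hc
  have hc_ge : (2/3 : ℝ) ≤ c := le_max_right _ _
  have hc_le1 : c ≤ 1 := max_le hm₀1 (by norm_num)
  have hm₀c : m₀ ≤ c := le_max_left _ _
  -- derivative within Ici x for x ≥ 0
  have hder : ∀ x ∈ Set.Ici (0:ℝ), HasDerivWithinAt m
      (1 + (u₂ / 2 - 2) * m x + (1 - u₂) / 2 * m x ^ 2) (Set.Ici x) x := by
    intro x hx
    exact (hode x hx).mono (Set.Ici_subset_Ici.2 hx)
  have hcont : ∀ T : ℝ, ContinuousOn m (Set.Icc 0 T) := by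
    intro T
    intro x hx
    exact ((hode x hx.1).continuousWithinAt).mono (fun y hy => hy.1)
  -- upper bound: for every ε ∈ (0,1), m t ≤ c + ε
  have hupper : ∀ t ≥ (0:ℝ), ∀ ε : ℝ, 0 < ε → ε < 1 → m t ≤ c + ε := by
    intro t ht ε hε hε1
    have key := image_le_of_deriv_right_lt_deriv_boundary
      (f := m) (f' := fun x => 1 + (u₂ / 2 - 2) * m x + (1 - u₂) / 2 * m x ^ 2)
      (a := 0) (b := t) (B := fun _ => c + ε) (B' := fun _ => 0)
      (hcont t) (fun x hx => hder x hx.1)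
      (by rw [hm0]; linarith)
      (fun x => hasDerivAt_const x (c + ε))
      ?_
    · exact key ⟨le_refl 0 |>.trans ht, le_refl t⟩ |>.trans (le_refl _)
    · intro x hx hfx
      rw [hfx]
      have hb1 : (2/3 : ℝ) < c + ε := by linarith
      have hb2 : c + ε < 2 := by linarith
      nlinarith [mul_nonneg hu0 (mul_nonneg (by linarith : (0:ℝ) ≤ c + ε - 2/3) (by linarith : (0:ℝ) ≤ 2 - (c+ε))),
        mul_pos (by linarith : (0:ℝ) < c + ε - 2/3) (by linarith : (0:ℝ) < 2 - (c+ε)),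
        mul_nonneg (sub_nonneg.2 hu1) (sq_nonneg (c + ε - 1))]
  -- lower bound: for every ε > 0, -ε ≤ m t
  have hlower : ∀ t ≥ (0:ℝ), ∀ ε : ℝ, 0 < ε → -ε ≤ m t := by
    intro t ht ε hε
    have key := image_le_of_deriv_right_lt_deriv_boundary
      (f := fun x => -m x) (f' := fun x => -(1 + (u₂ / 2 - 2) * m x + (1 - u₂) / 2 * m x ^ 2))
      (a := 0) (b := t) (B := fun _ => ε) (B' := fun _ => 0)
      ((hcont t).neg) (fun x hx => (hder x hx.1).neg)
      (by rw [hm0]; linarith)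
      (fun x => hasDerivAt_const x ε)
      ?_
    · have := key ⟨le_refl 0 |>.trans ht, le_refl t⟩
      linarith
    · intro x hx hfx
      have hmx : m x = -ε := by linarith
      rw [hmx]
      nlinarith [sq_nonneg ε, mul_nonneg (sub_nonneg.2 hu1) (sq_nonneg ε), mul_nonneg hu0 hε.le]
  intro t ht
  have h1 : 0 ≤ m t := by
    by_contra h
    push_neg at h
    have := hlower t ht (-(m t) / 2) (by linarith)
    linarith
  have h2 : m t ≤ c := by
    by_contra h
    push_neg at h
    have hε : (0:ℝ) < min ((m t - c) / 2) (1/2) := by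
      apply lt_min (by linarith) (by norm_num)
    have := hupper t ht _ hε (lt_of_le_of_lt (min_le_right _ _) (by norm_num))
    have h3 : min ((m t - c) / 2) (1/2) ≤ (m t - c)/2 := min_le_left _ _
    linarith
  exact ⟨h1, h2, h1, h2.trans hc_le1⟩
end

section
/- Fix u₂ ∈ [0,1], m₀ ∈ [0,1], v̄ > 0 and c > 0, set a₂ = u₂/2 − 2 and a₃ = (1 − u₂)/2, and let m : [0,∞) → ℝ be a differentiable function with m(0) = m₀ and m′(t) = 1 + a₂ m(t) + a₃ m(t)² for all t ≥ 0. Let γ = max(2/3, m₀). If v̄/(2c) > γ/(1 + γ), then for every t ≥ 0, ( v̄ − c · u₂ · m(t) ) − (1/2)·(1 − u₂ · m(t))·v̄ > 0; that is, the expected instant payoff of playing Hawk in state 2 strictly exceeds that of playing Dove at all times. -/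
theorem stmt_19 (u₂ : ℝ) (hu : u₂ ∈ Set.Icc (0 : ℝ) 1)
    (m₀ : ℝ) (hm₀ : m₀ ∈ Set.Icc (0 : ℝ) 1)
    (vbar c : ℝ) (hv : 0 < vbar) (hc : 0 < c)
    (m : ℝ → ℝ) (hm0 : m 0 = m₀)
    (hode : ∀ t ≥ (0 : ℝ), HasDerivWithinAt m
      (1 + (u₂ / 2 - 2) * m t + (1 - u₂) / 2 * m t ^ 2) (Set.Ici 0) t)
    (hγ : vbar / (2 * c) > max (2 / 3) m₀ / (1 + max (2 / 3) m₀)) :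
    ∀ t ≥ (0 : ℝ), 0 < vbar - c * u₂ * m t - 1 / 2 * (1 - u₂ * m t) * vbar := by
  obtain ⟨hu0, hu1⟩ := hu
  obtain ⟨hm00, hm01⟩ := hm₀
  set γ : ℝ := max (2 / 3) m₀ with hγdef
  have hγ23 : (2 : ℝ) / 3 ≤ γ := le_max_left _ _
  have hγ1 : γ ≤ 1 := max_le (by norm_num) hm01
  have hmγ : m₀ ≤ γ := le_max_right _ _
  have hcont : ∀ b : ℝ, ContinuousOn m (Set.Icc 0 b) := fun b x hx =>
    ((hode x hx.1).continuousWithinAt).mono (fun y hy => hy.1)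
  have hderiv : ∀ b : ℝ, ∀ x ∈ Set.Ico (0 : ℝ) b,
      HasDerivWithinAt m (1 + (u₂ / 2 - 2) * m x + (1 - u₂) / 2 * m x ^ 2) (Set.Ici x) x :=
    fun b x hx => (hode x hx.1).mono (Set.Ici_subset_Ici.mpr hx.1)
  -- upper bound
  have hupper : ∀ t ≥ (0 : ℝ), m t ≤ γ := by
    intro t ht
    have key : ∀ ε : ℝ, 0 < ε → ε ≤ 1 → m t ≤ γ + ε := by
      intro ε hε0 hε1
      have H := image_le_of_deriv_right_lt_deriv_boundary' (f := m)
        (f' := fun x => 1 + (u₂ / 2 - 2) * m x + (1 - u₂) / 2 * m x ^ 2)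
        (a := 0) (b := t) (B := fun _ => γ + ε) (B' := fun _ => 0)
        (hcont t) (hderiv t) (by show m 0 ≤ γ + ε; rw [hm0]; linarith)
        continuousOn_const (fun x _ => hasDerivWithinAt_const _ _ _) ?_
      · exact H ⟨ht, le_refl t⟩
      · intro x hx hcontact
        simp only [hcontact]
        have h1 : (2 : ℝ) / 3 < γ + ε := by linarith
        have h2 : γ + ε ≤ 2 := by linarith
        nlinarith [mul_nonneg hu0 (sub_nonneg.2 h2), mul_nonneg (sub_nonneg.2 hu1) (sub_nonneg.2 h2),
          sq_nonneg (γ + ε - 2)]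
    by_contra h
    push_neg at h
    have hε : m t ≤ γ + min 1 ((m t - γ) / 2) :=
      key _ (lt_min one_pos (by linarith)) (min_le_left _ _)
    have := min_le_right 1 ((m t - γ) / 2)
    linarith
  -- lower bound
  have hlower : ∀ t ≥ (0 : ℝ), 0 ≤ m t := by
    intro t ht
    have key : ∀ ε : ℝ, 0 < ε → -(m t) ≤ ε := by
      intro ε hε0
      have H := image_le_of_deriv_right_lt_deriv_boundary' (f := fun x => -(m x))
        (f' := fun x => -(1 + (u₂ / 2 - 2) * m x + (1 - u₂) / 2 * m x ^ 2))
        (a := 0) (b := t) (B := fun _ => ε) (B' := fun _ => 0)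
        ((hcont t).neg) (fun x hx => (hderiv t x hx).neg) (by show -(m 0) ≤ ε; rw [hm0]; linarith)
        continuousOn_const (fun x _ => hasDerivWithinAt_const _ _ _) ?_
      · exact H ⟨ht, le_refl t⟩
      · intro x hx hcontact
        have hmx : m x = -ε := by linarith [neg_eq_iff_eq_neg.mp hcontact]
        simp only [hmx]
        nlinarith [mul_nonneg hu0 hε0.le, sq_nonneg ε, mul_nonneg (sub_nonneg.2 hu1) (sq_nonneg ε)]
    by_contra h
    push_neg at h
    have := key (-(m t) / 2) (by linarith)
    linarith
  -- conclusion
  intro t ht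
  have h1 := hupper t ht
  have h2 := hlower t ht
  have hcross : γ * (2 * c) < vbar * (1 + γ) := by
    rw [gt_iff_lt, div_lt_div_iff₀ (by linarith) (by linarith)] at hγ
    linarith
  have hs : u₂ * m t ≤ γ := le_trans (mul_le_of_le_one_left h2 hu1) h1
  have hs0 : 0 ≤ u₂ * m t := mul_nonneg hu0 h2
  rcases le_or_gt c (vbar / 2) with hv2 | hv2
  · nlinarith
  · nlinarith [mul_nonneg (sub_nonneg.2 hs) (by linarith : (0:ℝ) ≤ c - vbar / 2)]
end
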